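/- In the 3-dimensional unimodular Lie algebra with orthonormal basis (e₁,e₂,e₃) and brackets [e₁,e₂] = α e₃, [e₁,e₃] = β e₂, [e₂,e₃] = γ e₁, let φ be the linear map φ(X) = −∇_X e₃ (Levi-Civita connection via the Koszul formula). Then the matrix of φ restricted to span(e₁,e₂) in the basis (e₁,e₂) is −(1/2)·[[0, α+β+γ],[−α+β+γ, 0]], and (∇_{e₁}φ)(e₁) + (∇_{e₂}φ)(e₂) = |φ|² e₃ where |φ|² = ((α+β+γ)² + (α−β−γ)²)/4; i.e., e₃ is a harmonic unit vector field. -/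

import Mathlib

open scoped RealInnerProductSpace

noncomputable def E (i : Fin 3) : EuclideanSpace ℝ (Fin 3) := EuclideanSpace.single i 1

/-!
In an orthonormal frame the Koszul formula gives every component `⟪∇_{eᵢ} eⱼ, eₖ⟫` as a
combination of structure constants. For the frame `[e₁,e₂] = α e₃`, `[e₁,e₃] = β e₂`,
`[e₂,e₃] = γ e₁` this yields `∇_{e₁} e₃ = a e₂`, `∇_{e₂} e₃ = c e₁`, `∇_{e₁} e₂ = -a e₃`,
`∇_{e₂} e₁ = -c e₃` and `∇_{eᵢ} eᵢ = 0`, with `a = (-α+β+γ)/2` and `c = (α+β+γ)/2`.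
The Koszul formula also makes `∇_X` linear, so
`(∇_{e₁}φ)(e₁) + (∇_{e₂}φ)(e₂) = -a ∇_{e₁} e₂ - c ∇_{e₂} e₁ = (a² + c²) e₃`.
-/

section

variable {F : Type*} [NormedAddCommGroup F] [InnerProductSpace ℝ F]

def IsKoszulConnection (Lb : F →ₗ[ℝ] F →ₗ[ℝ] F) (nabla : F → F → F) : Prop :=
  ∀ X Y Z, 2 * ⟪nabla X Y, Z⟫ = ⟪Lb X Y, Z⟫ - ⟪Lb Y Z, X⟫ + ⟪Lb Z X, Y⟫

namespace IsKoszulConnection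

variable {Lb : F →ₗ[ℝ] F →ₗ[ℝ] F} {nabla : F → F → F} (hK : IsKoszulConnection Lb nabla)
include hK

theorem zero_left (Y : F) : nabla 0 Y = 0 :=
  ext_inner_right ℝ fun Z => by simpa using hK 0 Y Z

theorem smul_right (X Y : F) (c : ℝ) : nabla X (c • Y) = c • nabla X Y :=
  ext_inner_right ℝ fun Z => by
    have h := hK X (c • Y) Z
    simp only [map_smul, LinearMap.smul_apply, real_inner_smul_left, real_inner_smul_right] at h ⊢
    linear_combination h / 2 - c / 2 * hK X Y Z

theorem eq_sum_orthonormalBasis {ι : Type*} [Fintype ι] (b : OrthonormalBasis ι ℝ F) (X Y : F) :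
    nabla X Y = ∑ k, ((⟪Lb X Y, b k⟫ - ⟪Lb Y (b k), X⟫ + ⟪Lb (b k) X, Y⟫) / 2) • b k := by
  conv_lhs => rw [← b.sum_repr' (nabla X Y)]
  congr! 2 with k
  rw [real_inner_comm]
  linarith [hK X Y (b k)]

end IsKoszulConnection

/-- In Milnor's notation `[e₂,e₃] = λ₁ e₁`, `[e₃,e₁] = λ₂ e₂`, `[e₁,e₂] = λ₃ e₃` this is the
frame with `(λ₁, λ₂, λ₃) = (γ, -β, α)`. -/
structure IsUnimodularFrame (Lb : F →ₗ[ℝ] F →ₗ[ℝ] F) (b : OrthonormalBasis (Fin 3) ℝ F)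
    (α β γ : ℝ) : Prop where
  antisymm : ∀ X Y, Lb X Y = -Lb Y X
  bracket_01 : Lb (b 0) (b 1) = α • b 2
  bracket_02 : Lb (b 0) (b 2) = β • b 1
  bracket_12 : Lb (b 1) (b 2) = γ • b 0

namespace IsUnimodularFrame

variable {Lb : F →ₗ[ℝ] F →ₗ[ℝ] F} {b : OrthonormalBasis (Fin 3) ℝ F} {α β γ : ℝ}
  (hb : IsUnimodularFrame Lb b α β γ)
include hb

theorem bracket_self (X : F) : Lb X X = 0 := by
  have h := hb.antisymm X X
  rw [← sub_eq_zero, sub_neg_eq_add, ← two_smul ℝ] at h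
  exact (smul_eq_zero.mp h).resolve_left two_ne_zero

theorem bracket_table :
    Lb (b 0) (b 1) = α • b 2 ∧ Lb (b 0) (b 2) = β • b 1 ∧ Lb (b 1) (b 2) = γ • b 0 ∧
      Lb (b 1) (b 0) = -(α • b 2) ∧ Lb (b 2) (b 0) = -(β • b 1) ∧
      Lb (b 2) (b 1) = -(γ • b 0) ∧ ∀ i, Lb (b i) (b i) = 0 := by
  refine ⟨hb.bracket_01, hb.bracket_02, hb.bracket_12, ?_, ?_, ?_, fun i => hb.bracket_self _⟩
  · rw [hb.antisymm, hb.bracket_01]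
  · rw [hb.antisymm, hb.bracket_02]
  · rw [hb.antisymm, hb.bracket_12]

variable {nabla : F → F → F} (hK : IsKoszulConnection Lb nabla)
include hK

theorem nabla_self (i : Fin 3) : nabla (b i) (b i) = 0 := by
  rw [hK.eq_sum_orthonormalBasis b]
  fin_cases i <;> simp [Fin.sum_univ_three, hb.bracket_table, real_inner_smul_left, b.inner_eq_ite]

theorem nabla_01 : nabla (b 0) (b 1) = ((α - β - γ) / 2) • b 2 := by
  rw [hK.eq_sum_orthonormalBasis b]
  simp [Fin.sum_univ_three, hb.bracket_table, real_inner_smul_left, b.inner_eq_ite]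
  module

theorem nabla_10 : nabla (b 1) (b 0) = ((-α - β - γ) / 2) • b 2 := by
  rw [hK.eq_sum_orthonormalBasis b]
  simp [Fin.sum_univ_three, hb.bracket_table, real_inner_smul_left, b.inner_eq_ite]
  module

theorem nabla_02 : nabla (b 0) (b 2) = ((-α + β + γ) / 2) • b 1 := by
  rw [hK.eq_sum_orthonormalBasis b]
  simp [Fin.sum_univ_three, hb.bracket_table, real_inner_smul_left, b.inner_eq_ite]
  module

theorem nabla_12 : nabla (b 1) (b 2) = ((α + β + γ) / 2) • b 0 := by
  rw [hK.eq_sum_orthonormalBasis b]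
  simp [Fin.sum_univ_three, hb.bracket_table, real_inner_smul_left, b.inner_eq_ite]
  module

end IsUnimodularFrame

end

theorem unimodular_harmonic_e3 (α β γ : ℝ)
    (Lb : EuclideanSpace ℝ (Fin 3) →ₗ[ℝ] EuclideanSpace ℝ (Fin 3) →ₗ[ℝ] EuclideanSpace ℝ (Fin 3))
    (hanti : ∀ X Y, Lb X Y = -Lb Y X)
    (h12 : Lb (E 0) (E 1) = α • E 2)
    (h13 : Lb (E 0) (E 2) = β • E 1)
    (h23 : Lb (E 1) (E 2) = γ • E 0)
    (nabla : EuclideanSpace ℝ (Fin 3) → EuclideanSpace ℝ (Fin 3) → EuclideanSpace ℝ (Fin 3))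
    (hK : ∀ X Y Z, 2 * ⟪nabla X Y, Z⟫ = ⟪Lb X Y, Z⟫ - ⟪Lb Y Z, X⟫ + ⟪Lb Z X, Y⟫)
    (φ : EuclideanSpace ℝ (Fin 3) → EuclideanSpace ℝ (Fin 3))
    (hφ : ∀ X, φ X = -nabla X (E 2)) :
    φ (E 0) = (-((-α + β + γ) / 2)) • E 1 ∧
    φ (E 1) = (-((α + β + γ) / 2)) • E 0 ∧
    nabla (E 0) (φ (E 0)) - φ (nabla (E 0) (E 0)) +
        (nabla (E 1) (φ (E 1)) - φ (nabla (E 1) (E 1)))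
      = (((α + β + γ) ^ 2 + (α - β - γ) ^ 2) / 4) • E 2 := by
  have hE : E = EuclideanSpace.basisFun (Fin 3) ℝ :=
    funext fun i => (EuclideanSpace.basisFun_apply (Fin 3) ℝ i).symm
  rw [hE] at h12 h13 h23 hφ ⊢
  generalize EuclideanSpace.basisFun (Fin 3) ℝ = b at *
  have hb : IsUnimodularFrame Lb b α β γ := ⟨hanti, h12, h13, h23⟩
  replace hK : IsKoszulConnection Lb nabla := hK
  have hφ0 : φ (b 0) = (-((-α + β + γ) / 2)) • b 1 := by rw [hφ, hb.nabla_02 hK, neg_smul]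
  have hφ1 : φ (b 1) = (-((α + β + γ) / 2)) • b 0 := by rw [hφ, hb.nabla_12 hK, neg_smul]
  refine ⟨hφ0, hφ1, ?_⟩
  rw [hφ0, hφ1, hK.smul_right, hK.smul_right, hb.nabla_01 hK, hb.nabla_10 hK,
    hb.nabla_self hK, hb.nabla_self hK, hφ 0, hK.zero_left]
  module
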